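/- For a > 0 and real constants c₁, c₂, the function z_B(s) = -∫₁^∞ v^{-2s-2}·(2cos(2av) - 4π(α₀+α₁)a)/(πa) dv, defined for Re(s) > -1/2, extends meromorphically; its extension has a simple pole at s = -1/2 with residue 2(α₀+α₁), and finite part at s = -1/2 equal to 2·ci(2a)/(πa), where ci is the cosine integral ci(x) = -∫_x^∞ cos(t)/t dt. -/

import Mathlib

/-!
Integrating by parts twice gives, for `Re c < -1` and `ω ≠ 0`,
`∫₁^∞ v^c cos(ωv) dv = -Φ_c(1) - c(c-1)/ω² ∫₁^∞ v^(c-2) cos(ωv) dv` with an explicit boundary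
term `Φ_c`. The right-hand side is holomorphic on `Re c < 1`, since the remaining integral is a
Mellin transform of a bounded function. With `c = -2s-2` this continues the cosine part of `z_B`
to `Re s > -3/2`, while `∫₁^∞ v^c dv = 1/(2s+1)` produces the pole. At `c = -1` the same
identity holds for the improper integral `∫₁^R v⁻¹ cos(ωv) dv = ∫_ω^(ωR) cos t / t dt`, whose
limit is `-ci(ω)`.
-/

open MeasureTheory Real Filter Set Topology

theorem hasDerivAt_ofReal_cpow_of_pos {v : ℝ} (hv : 0 < v) (c : ℂ) :
    HasDerivAt (fun y : ℝ => (y : ℂ) ^ c) (c * (v : ℂ) ^ (c - 1)) v :=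
  (Complex.hasStrictDerivAt_cpow_const (Complex.ofReal_mem_slitPlane.2 hv)).hasDerivAt.comp_ofReal

theorem continuousOn_cpow_mul_cos (ω : ℝ) (c : ℂ) :
    ContinuousOn (fun v : ℝ => (v : ℂ) ^ c * cos (ω * v)) (Ioi 0) := fun v hv =>
  ((hasDerivAt_ofReal_cpow_of_pos hv c).continuousAt.mul (by fun_prop)).continuousWithinAt

theorem integrableOn_Ioi_cpow_mul_cos (ω : ℝ) {c : ℂ} (hc : c.re < -1) :
    IntegrableOn (fun v : ℝ => (v : ℂ) ^ c * cos (ω * v)) (Ioi 1) := by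
  refine (integrableOn_Ioi_cpow_of_lt hc one_pos).mul_bdd
    (by fun_prop : Continuous fun v : ℝ => (cos (ω * v) : ℂ)).aestronglyMeasurable
    (Eventually.of_forall fun v => ?_) (c := 1)
  rw [Complex.norm_real, norm_eq_abs]
  exact abs_cos_le_one _

theorem tendsto_ofReal_cpow_mul_atTop_nhds_zero {c : ℂ} (hc : c.re < 0) {f : ℝ → ℂ} {M : ℝ}
    (hf : ∀ v, ‖f v‖ ≤ M) : Tendsto (fun v : ℝ => (v : ℂ) ^ c * f v) atTop (𝓝 0) := by
  refine Tendsto.zero_mul_isBoundedUnder_le ?_ ⟨M, eventually_map.2 (.of_forall hf)⟩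
  rw [tendsto_zero_iff_norm_tendsto_zero]
  refine (tendsto_rpow_neg_atTop (neg_pos.2 hc)).congr' ?_
  filter_upwards [Complex.norm_ofReal_cpow_eventually_eq_atTop c] with v hv
  rw [hv, neg_neg]

/-- The boundary term `Φ_c` of the double integration by parts. -/
noncomputable def cpowCosBoundary (ω : ℝ) (c : ℂ) (v : ℝ) : ℂ :=
  (v : ℂ) ^ c * (sin (ω * v) / ω : ℝ) + (v : ℂ) ^ (c - 1) * (c * (cos (ω * v) / ω ^ 2 : ℝ))

theorem hasDerivAt_cpowCosBoundary {ω : ℝ} (hω : ω ≠ 0) (c : ℂ) {v : ℝ} (hv : 0 < v) :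
    HasDerivAt (cpowCosBoundary ω c)
      ((v : ℂ) ^ c * cos (ω * v) + c * (c - 1) / ω ^ 2 * ((v : ℂ) ^ (c - 2) * cos (ω * v))) v := by
  have hlin : HasDerivAt (fun y : ℝ => ω * y) ω v := by simpa using (hasDerivAt_id v).const_mul ω
  have hsin : HasDerivAt (fun y : ℝ => sin (ω * y) / ω) (cos (ω * v)) v :=
    (hlin.sin.div_const ω).congr_deriv (by field_simp)
  have hcos : HasDerivAt (fun y : ℝ => cos (ω * y) / ω ^ 2) (-(sin (ω * v) / ω)) v :=
    (hlin.cos.div_const (ω ^ 2)).congr_deriv (by field_simp)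
  refine (((hasDerivAt_ofReal_cpow_of_pos hv c).mul hsin.ofReal_comp).add
    ((hasDerivAt_ofReal_cpow_of_pos hv (c - 1)).mul (hcos.ofReal_comp.const_mul c))).congr_deriv ?_
  have hω' : (ω : ℂ) ≠ 0 := Complex.ofReal_ne_zero.2 hω
  rw [show c - 1 - 1 = c - 2 by ring]
  push_cast
  field_simp
  ring

theorem tendsto_cpowCosBoundary_atTop (ω : ℝ) {c : ℂ} (hc : c.re < 0) :
    Tendsto (cpowCosBoundary ω c) atTop (𝓝 0) := by
  have hc' : (c - 1).re < 0 := by rw [Complex.sub_re, Complex.one_re]; linarith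
  have hsin : ∀ v : ℝ, ‖((sin (ω * v) / ω : ℝ) : ℂ)‖ ≤ |ω|⁻¹ := fun v => by
    rw [Complex.norm_real, norm_div, norm_eq_abs, norm_eq_abs, div_eq_mul_inv]
    exact mul_le_of_le_one_left (by positivity) (abs_sin_le_one _)
  have hcos : ∀ v : ℝ, ‖c * ((cos (ω * v) / ω ^ 2 : ℝ) : ℂ)‖ ≤ ‖c‖ * (ω ^ 2)⁻¹ := fun v => by
    rw [norm_mul, Complex.norm_real, norm_div, norm_eq_abs, norm_eq_abs,
      abs_of_nonneg (sq_nonneg ω), div_eq_mul_inv]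
    gcongr
    exact mul_le_of_le_one_left (by positivity) (abs_cos_le_one _)
  rw [← add_zero (0 : ℂ)]
  exact (tendsto_ofReal_cpow_mul_atTop_nhds_zero hc hsin).add
    (tendsto_ofReal_cpow_mul_atTop_nhds_zero hc' hcos)

theorem intervalIntegral_cpow_mul_cos {ω : ℝ} (hω : ω ≠ 0) (c : ℂ) {a b : ℝ} (ha : 0 < a)
    (hb : 0 < b) :
    ∫ v in a..b, (v : ℂ) ^ c * cos (ω * v) =
      cpowCosBoundary ω c b - cpowCosBoundary ω c a -
        c * (c - 1) / ω ^ 2 * ∫ v in a..b, (v : ℂ) ^ (c - 2) * cos (ω * v) := by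
  have hpos : ∀ v ∈ uIcc a b, 0 < v := fun v hv => (lt_min ha hb).trans_le hv.1
  have hint (c' : ℂ) : IntervalIntegrable (fun v : ℝ => (v : ℂ) ^ c' * cos (ω * v)) volume a b :=
    ((continuousOn_cpow_mul_cos ω c').mono hpos).intervalIntegrable
  rw [← intervalIntegral.integral_eq_sub_of_hasDerivAt
      (fun v hv => hasDerivAt_cpowCosBoundary hω c (hpos v hv))
      ((hint c).add ((hint (c - 2)).const_mul _)),
    intervalIntegral.integral_add (hint c) ((hint _).const_mul _),
    intervalIntegral.integral_const_mul]
  ring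

/-- The continuation of `c ↦ ∫ v in Ioi 1, v ^ c * cos (ω v)` from `Re c < -1` to `Re c < 1`. -/
noncomputable def cpowCosIntegral (ω : ℝ) (c : ℂ) : ℂ :=
  -cpowCosBoundary ω c 1 -
    c * (c - 1) / ω ^ 2 * ∫ v in Ioi (1 : ℝ), (v : ℂ) ^ (c - 2) * cos (ω * v)

theorem tendsto_intervalIntegral_cpow_mul_cos {ω : ℝ} (hω : ω ≠ 0) {c : ℂ} (hc : c.re < 0) :
    Tendsto (fun R : ℝ => ∫ v in (1 : ℝ)..R, (v : ℂ) ^ c * cos (ω * v)) atTop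
      (𝓝 (cpowCosIntegral ω c)) := by
  have hc2 : (c - 2).re < -1 := by rw [Complex.sub_re, Complex.re_ofNat]; linarith
  have hrem := intervalIntegral_tendsto_integral_Ioi 1
    (integrableOn_Ioi_cpow_mul_cos ω hc2) tendsto_id
  have := ((tendsto_cpowCosBoundary_atTop ω hc).sub_const (cpowCosBoundary ω c 1)).sub
    (hrem.const_mul (c * (c - 1) / ω ^ 2))
  rw [zero_sub] at this
  refine this.congr' ?_
  filter_upwards [eventually_gt_atTop 0] with R hR
  exact (intervalIntegral_cpow_mul_cos hω c one_pos hR).symm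

theorem cpowCosIntegral_eq_integral {ω : ℝ} (hω : ω ≠ 0) {c : ℂ} (hc : c.re < -1) :
    cpowCosIntegral ω c = ∫ v in Ioi (1 : ℝ), (v : ℂ) ^ c * cos (ω * v) :=
  tendsto_nhds_unique (tendsto_intervalIntegral_cpow_mul_cos hω (by linarith))
    (intervalIntegral_tendsto_integral_Ioi 1 (integrableOn_Ioi_cpow_mul_cos ω hc) tendsto_id)

theorem integral_Ioi_cpow_mul_cos_sub_const {ω : ℝ} (hω : ω ≠ 0) {c : ℂ} (hc : c.re < -1)
    (A B : ℂ) :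
    ∫ v in Ioi (1 : ℝ), (v : ℂ) ^ c * (A * cos (ω * v) - B) =
      A * cpowCosIntegral ω c + B / (c + 1) := by
  simp_rw [mul_sub, mul_left_comm _ A, mul_comm _ B]
  rw [integral_sub ((integrableOn_Ioi_cpow_mul_cos ω hc).const_mul A)
      ((integrableOn_Ioi_cpow_of_lt hc one_pos).const_mul B),
    integral_const_mul, integral_const_mul, ← cpowCosIntegral_eq_integral hω hc,
    integral_Ioi_cpow_of_lt hc one_pos, Complex.ofReal_one, Complex.one_cpow]
  ring

theorem cpowCosIntegral_neg_one {ω : ℝ} (hω : 0 < ω) {l : ℝ}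
    (h : Tendsto (fun R : ℝ => ∫ t in ω..R, cos t / t) atTop (𝓝 l)) :
    cpowCosIntegral ω (-1) = l := by
  have hsub (R : ℝ) : ∫ v in (1 : ℝ)..R, (v : ℂ) ^ (-1 : ℂ) * cos (ω * v) =
      ((∫ t in ω..ω * R, cos t / t : ℝ) : ℂ) := by
    have hscale :=
      intervalIntegral.mul_integral_comp_mul_left (f := fun t => cos t / t) (a := 1) (b := R) ω
    rw [mul_one] at hscale
    rw [← hscale, ← intervalIntegral.integral_const_mul, ← intervalIntegral.integral_ofReal]
    refine intervalIntegral.integral_congr fun v _ => ?_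
    rcases eq_or_ne v 0 with rfl | hv
    · simp
    · have hω' : (ω : ℂ) ≠ 0 := Complex.ofReal_ne_zero.2 hω.ne'
      rw [Complex.cpow_neg_one]
      push_cast
      field_simp
  refine tendsto_nhds_unique (tendsto_intervalIntegral_cpow_mul_cos hω.ne' (by norm_num)) ?_
  simp_rw [hsub]
  exact (Complex.continuous_ofReal.tendsto l).comp (h.comp (tendsto_id.const_mul_atTop hω))

theorem differentiableOn_integral_Ioi_one_cpow_mul {f : ℝ → ℂ} {a : ℝ} (hf : LocallyIntegrable f)
    (hf_top : f =O[atTop] (· ^ (-a))) :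
    DifferentiableOn ℂ (fun s : ℂ => ∫ v in Ioi (1 : ℝ), (v : ℂ) ^ s * f v) {s | s.re < a - 1} := by
  have hmellin : (fun s : ℂ => ∫ v in Ioi (1 : ℝ), (v : ℂ) ^ s * f v) =
      fun s => mellin ((Ioi 1).indicator f) (s + 1) := by
    ext s
    have hintegrand (t : ℝ) : (t : ℂ) ^ (s + 1 - 1) • (Ioi 1).indicator f t =
        (Ioi 1).indicator (fun v : ℝ => (v : ℂ) ^ s * f v) t := by
      rw [add_sub_cancel_right, smul_eq_mul, indicator_mul_right]
    simp_rw [mellin, hintegrand]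
    rw [setIntegral_indicator measurableSet_Ioi, inter_eq_right.2 (Ioi_subset_Ioi zero_le_one)]
  have h_top : (Ioi 1).indicator f =O[atTop] (· ^ (-a)) := by
    refine hf_top.congr' ?_ EventuallyEq.rfl
    filter_upwards [eventually_gt_atTop 1] with t ht
    exact (indicator_of_mem ht f).symm
  have h_bot (b : ℝ) : (Ioi 1).indicator f =O[𝓝[>] 0] (· ^ (-b)) := by
    refine (Asymptotics.isBigO_zero _ _).congr' ?_ EventuallyEq.rfl
    filter_upwards [(eventually_lt_nhds one_pos).filter_mono nhdsWithin_le_nhds] with t ht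
    exact (indicator_of_notMem (not_lt.2 ht.le) f).symm
  rw [hmellin]
  intro s hs
  refine (DifferentiableAt.comp (g := mellin ((Ioi 1).indicator f)) (f := fun s : ℂ => s + 1) s ?_
    (by fun_prop)).differentiableWithinAt
  refine mellin_differentiableAt_of_isBigO_rpow
    ((hf.indicator measurableSet_Ioi).locallyIntegrableOn _) h_top ?_ (h_bot s.re) ?_
  · rw [Complex.add_re, Complex.one_re]; linarith [show s.re < a - 1 from hs]
  · rw [Complex.add_re, Complex.one_re]; linarith

theorem differentiableOn_cpowCosIntegral (ω : ℝ) :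
    DifferentiableOn ℂ (cpowCosIntegral ω) {c | c.re < 1} := by
  have hbdry : (fun c => cpowCosBoundary ω c 1) =
      fun c => ((sin ω / ω : ℝ) : ℂ) + c * ((cos ω / ω ^ 2 : ℝ) : ℂ) := by
    ext c; simp [cpowCosBoundary]
  have hcos_top : (fun v : ℝ => (cos (ω * v) : ℂ)) =O[atTop] (· ^ (-(0 : ℝ))) :=
    Asymptotics.IsBigO.of_bound 1 (.of_forall fun v => by
      rw [Complex.norm_real, norm_eq_abs, neg_zero, rpow_zero, norm_one, one_mul]
      exact abs_cos_le_one _)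
  have hrem : DifferentiableOn ℂ
      (fun c : ℂ => ∫ v in Ioi (1 : ℝ), (v : ℂ) ^ (c - 2) * cos (ω * v)) {c | c.re < 1} :=
    (differentiableOn_integral_Ioi_one_cpow_mul (by fun_prop : Continuous _).locallyIntegrable
      hcos_top).comp (by fun_prop) fun c (hc : c.re < 1) =>
        show (c - 2).re < 0 - 1 by rw [Complex.sub_re, Complex.re_ofNat]; linarith
  have hb : DifferentiableOn ℂ (fun c => cpowCosBoundary ω c 1) {c | c.re < 1} := by
    rw [hbdry]; fun_prop
  exact hb.neg.sub
    ((by fun_prop : DifferentiableOn ℂ (fun c : ℂ => c * (c - 1) / ω ^ 2) _).mul hrem)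

theorem zB_meromorphic_continuation (a α₀ α₁ : ℝ) (ha : 0 < a) (ci2a : ℝ)
    (hci : Tendsto (fun R : ℝ => -∫ t in (2 * a)..R, Real.cos t / t) atTop (𝓝 ci2a)) :
    ∃ g : ℂ → ℂ, AnalyticOn ℂ g {s : ℂ | -(3 / 2) < s.re} ∧
      (∀ s : ℂ, -(1 / 2) < s.re →
        -∫ v in Ioi (1:ℝ), (v : ℂ) ^ (-2 * s - 2) *
            (((2 * Real.cos (2 * a * v) - 4 * π * (α₀ + α₁) * a) / (π * a) : ℝ) : ℂ) =
          g s + 4 * (α₀ + α₁) / (2 * s + 1)) ∧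
      g (-(1 / 2)) = ((2 * ci2a / (π * a) : ℝ) : ℂ) := by
  have hre (s : ℂ) : (-2 * s - 2).re = -2 * s.re - 2 := by simp
  have hω : 2 * a ≠ 0 := by positivity
  have ha' : (a : ℂ) ≠ 0 := Complex.ofReal_ne_zero.2 ha.ne'
  have hπ : (π : ℂ) ≠ 0 := Complex.ofReal_ne_zero.2 pi_ne_zero
  refine ⟨fun s => -(2 / (π * a)) * cpowCosIntegral (2 * a) (-2 * s - 2), ?_, fun s hs => ?_, ?_⟩
  · refine (((differentiableOn_cpowCosIntegral (2 * a)).comp (by fun_prop) fun s hs => ?_).const_mul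
      _).analyticOn (isOpen_lt continuous_const Complex.continuous_re)
    show (-2 * s - 2).re < 1
    rw [hre]; linarith [show -(3 / 2) < s.re from hs]
  · have hc : (-2 * s - 2).re < -1 := by rw [hre]; linarith
    have hsplit (v : ℝ) :
        (((2 * Real.cos (2 * a * v) - 4 * π * (α₀ + α₁) * a) / (π * a) : ℝ) : ℂ) =
          2 / (π * a) * Real.cos (2 * a * v) - 4 * (α₀ + α₁) := by
      push_cast; field_simp
    simp_rw [hsplit]
    rw [integral_Ioi_cpow_mul_cos_sub_const hω hc, show -2 * s - 2 + 1 = -(2 * s + 1) by ring,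
      div_neg]
    ring
  · dsimp only
    rw [show -2 * (-(1 / 2) : ℂ) - 2 = -1 by norm_num,
      cpowCosIntegral_neg_one (by positivity) (by simpa using hci.neg)]
    push_cast
    ring
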